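/- Let N ≥ 2 and let F : ℝ^N → [0,∞) be a convex function of class C² on ℝ^N\{0}, even, positively homogeneous of degree 1, with F(ξ) > 0 for all ξ ≠ 0. Let F^o be its polar, κ_N = |{x : F^o(x) ≤ 1}|, λ_N = N^{N/(N−1)} κ_N^{1/(N−1)}. Fix 0 ≤ β < N, p > 0 and let Φ(s) = e^s − Σ_{k=0}^{N−2} s^k/k!. Then there exists C = C(p, N, β, λ_N) > 0 such that for every v ∈ W^{1,N}(ℝ^N), ∫_{{x ∈ ℝ^N : |v(x)| ≤ 1}} Φ(λ_N (1−β/N) p |v|^{N/(N−1)}) / F^o(x)^β dx ≤ C (1 + ∫_{ℝ^N} |v|^N dx). -/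

import Mathlib

open MeasureTheory Filter Real
open scoped ENNReal Topology

noncomputable section

abbrev Euc (N : ℕ) := EuclideanSpace ℝ (Fin N)

/-- The polar (support) function `F^o(x) = sup_{ξ ≠ 0} ⟨x, ξ⟩ / F(ξ)`. -/
def polarF {N : ℕ} (F : Euc N → ℝ) (x : Euc N) : ℝ :=
  sSup {r : ℝ | ∃ ξ : Euc N, ξ ≠ 0 ∧ r = (inner ℝ x ξ : ℝ) / F ξ}

/-- `κ_N`: the Lebesgue measure of the unit Wulff ball `{F^o ≤ 1}`. -/
def wulffVolume {N : ℕ} (F : Euc N → ℝ) : ℝ :=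
  (volume {x : Euc N | polarF F x ≤ 1}).toReal

/-- `λ_N = N^{N/(N-1)} κ_N^{1/(N-1)}`. -/
def lambdaN {N : ℕ} (F : Euc N → ℝ) : ℝ :=
  (N : ℝ) ^ ((N : ℝ) / ((N : ℝ) - 1)) * wulffVolume F ^ (1 / ((N : ℝ) - 1))

/-- Positive definiteness of the Hessian of `F²` away from the origin. -/
def PosDefHess {N : ℕ} (F : Euc N → ℝ) : Prop :=
  ∀ x : Euc N, x ≠ 0 → ∀ v : Euc N, v ≠ 0 →
    0 < fderiv ℝ (fderiv ℝ (fun y => F y ^ 2)) x v v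

/-- `g` is the (distributional) weak gradient of `u`. -/
def HasWeakGradient {N : ℕ} (u : Euc N → ℝ) (g : Euc N → Euc N) : Prop :=
  ∀ φ : Euc N → ℝ, ContDiff ℝ (⊤ : ℕ∞) φ → HasCompactSupport φ →
    ∫ x, u x • gradient φ x = - ∫ x, φ x • g x

/-- Membership in the Sobolev space `W^{1,p}(ℝ^N)`, with weak gradient `g`. -/
def MemW1 {N : ℕ} (p : ℝ≥0∞) (u : Euc N → ℝ) (g : Euc N → Euc N) : Prop :=
  MemLp u p volume ∧ MemLp g p volume ∧ HasWeakGradient u g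

/-- Membership in `W₀^{1,p}(Ω)` (closure of `C_c^∞(Ω)` in the `W^{1,p}` norm),
for functions defined on all of `ℝ^N`, with weak gradient `g`. -/
def MemW10 {N : ℕ} (p : ℝ≥0∞) (Ω : Set (Euc N)) (u : Euc N → ℝ) (g : Euc N → Euc N) : Prop :=
  MemW1 p u g ∧
    ∀ ε : ℝ, 0 < ε → ∃ φ : Euc N → ℝ, ContDiff ℝ (⊤ : ℕ∞) φ ∧ HasCompactSupport φ ∧
      tsupport φ ⊆ Ω ∧
      eLpNorm (fun x => u x - φ x) p volume
        + eLpNorm (fun x => g x - gradient φ x) p volume < ENNReal.ofReal ε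

/-- Weak convergence `u_n ⇀ u` in `W^{1,p}`, tested against `L^q` pairs
(`q` the conjugate exponent of `p`). -/
def WeakConvW1 {N : ℕ} (q : ℝ≥0∞) (u : ℕ → Euc N → ℝ) (g : ℕ → Euc N → Euc N)
    (ul : Euc N → ℝ) (gl : Euc N → Euc N) : Prop :=
  (∀ v : Euc N → ℝ, MemLp v q volume →
      Tendsto (fun n => ∫ x, u n x * v x) atTop (𝓝 (∫ x, ul x * v x))) ∧
  (∀ h : Euc N → Euc N, MemLp h q volume →
      Tendsto (fun n => ∫ x, (inner ℝ (g n x) (h x) : ℝ)) atTop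
        (𝓝 (∫ x, (inner ℝ (gl x) (h x) : ℝ))))

/-- The truncated exponential `Φ(s) = e^s - ∑_{k=0}^{N-2} s^k/k!`. -/
def truncExp (N : ℕ) (s : ℝ) : ℝ :=
  Real.exp s - ∑ k ∈ Finset.range (N - 1), s ^ k / (Nat.factorial k)

end



section AuxLemmas
open Metric

lemma truncExp_nonneg (N : ℕ) {s : ℝ} (hs : 0 ≤ s) : 0 ≤ truncExp N s :=
  sub_nonneg.2 (Real.sum_le_exp_of_nonneg hs _)

set_option maxHeartbeats 1000000 in
lemma truncExp_le (N : ℕ) {s : ℝ} (hs : 0 ≤ s) :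
    truncExp N s ≤ s ^ (N - 1) * Real.exp s := by
  set m := N - 1
  have hsum : Summable (fun n => s ^ n / n.factorial : ℕ → ℝ) :=
    Real.summable_pow_div_factorial s
  have hexp : Real.exp s = ∑' n : ℕ, s ^ n / n.factorial := by
    rw [Real.exp_eq_exp_ℝ, NormedSpace.exp_eq_tsum_div]
  have hsplit := Summable.sum_add_tsum_nat_add m hsum
  have h1 : truncExp N s = ∑' k : ℕ, s ^ (k + m) / (k + m).factorial := by
    rw [truncExp, hexp]; linarith [hsplit]
  rw [h1]
  have hL : Summable (fun k => s ^ (k + m) / (k + m).factorial : ℕ → ℝ) :=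
    (summable_nat_add_iff m).2 hsum
  have hR : Summable (fun k => s ^ m * (s ^ k / k.factorial) : ℕ → ℝ) :=
    hsum.mul_left _
  calc ∑' k : ℕ, s ^ (k + m) / (k + m).factorial
      ≤ ∑' k : ℕ, s ^ m * (s ^ k / k.factorial) := by
        refine Summable.tsum_le_tsum (fun k => ?_) hL hR
        have hfac : (k.factorial : ℝ) ≤ ((k + m).factorial : ℝ) := by
          exact_mod_cast Nat.factorial_le (Nat.le_add_right k m)
        have hkpos : (0 : ℝ) < k.factorial := by positivity
        calc s ^ (k + m) / (k + m).factorial ≤ s ^ (k + m) / k.factorial := by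
              apply div_le_div_of_nonneg_left (by positivity) hkpos hfac
          _ = s ^ m * (s ^ k / k.factorial) := by rw [pow_add]; ring
    _ = s ^ m * Real.exp s := by rw [tsum_mul_left, hexp]

lemma F_bounds {N : ℕ} (hN : 2 ≤ N) (F : Euc N → ℝ)
    (hFconv : ConvexOn ℝ Set.univ F)
    (hFhom : ∀ (t : ℝ) (ξ : Euc N), F (t • ξ) = |t| * F ξ)
    (hFpos : ∀ ξ : Euc N, ξ ≠ 0 → 0 < F ξ) :
    ∃ c C : ℝ, 0 < c ∧ 0 < C ∧ ∀ ξ : Euc N, c * ‖ξ‖ ≤ F ξ ∧ F ξ ≤ C * ‖ξ‖ := by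
  haveI : Nonempty (Fin N) := ⟨⟨0, by omega⟩⟩
  have hcont : Continuous F := by
    have := hFconv.continuousOn isOpen_univ
    exact continuousOn_univ.mp this
  have hF0 : F 0 = 0 := by
    have := hFhom 0 0; simpa using this
  have hsph : (Metric.sphere (0 : Euc N) 1).Nonempty :=
    NormedSpace.sphere_nonempty.2 zero_le_one
  have hcomp : IsCompact (Metric.sphere (0 : Euc N) 1) := isCompact_sphere 0 1
  obtain ⟨a, ha, hamin⟩ := hcomp.exists_isMinOn hsph hcont.continuousOn
  obtain ⟨b, hb, hbmax⟩ := hcomp.exists_isMaxOn hsph hcont.continuousOn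
  have ha0 : a ≠ 0 := by
    intro h; rw [h] at ha; simp at ha
  have hb0 : b ≠ 0 := by
    intro h; rw [h] at hb; simp at hb
  refine ⟨F a, F b, hFpos a ha0, hFpos b hb0, fun ξ => ?_⟩
  rcases eq_or_ne ξ 0 with rfl | hξ
  · simp [hF0]
  · have hnξ : (0 : ℝ) < ‖ξ‖ := norm_pos_iff.2 hξ
    have hu : ‖ξ‖⁻¹ • ξ ∈ Metric.sphere (0 : Euc N) 1 := by
      simp [norm_smul, abs_of_nonneg (inv_nonneg.2 hnξ.le), inv_mul_cancel₀ hnξ.ne']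
    have hkey : F ξ = ‖ξ‖ * F (‖ξ‖⁻¹ • ξ) := by
      have := hFhom ‖ξ‖ (‖ξ‖⁻¹ • ξ)
      rw [smul_smul, mul_inv_cancel₀ hnξ.ne', one_smul, abs_of_pos hnξ] at this
      linarith
    constructor
    · rw [hkey, mul_comm (F a)]
      exact mul_le_mul_of_nonneg_left (hamin hu) hnξ.le
    · rw [hkey, mul_comm (F b)]
      exact mul_le_mul_of_nonneg_left (hbmax hu) hnξ.le

lemma polar_lower {N : ℕ} (F : Euc N → ℝ) {c C : ℝ} (hc : 0 < c) (hC : 0 < C)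
    (hlow : ∀ ξ : Euc N, c * ‖ξ‖ ≤ F ξ)
    (hupp : ∀ ξ : Euc N, F ξ ≤ C * ‖ξ‖)
    (hFpos : ∀ ξ : Euc N, ξ ≠ 0 → 0 < F ξ)
    (x : Euc N) (hx : x ≠ 0) : ‖x‖ / C ≤ polarF F x := by
  have hbdd : BddAbove {r : ℝ | ∃ ξ : Euc N, ξ ≠ 0 ∧ r = (inner ℝ x ξ : ℝ) / F ξ} := by
    refine ⟨‖x‖ / c, ?_⟩
    rintro r ⟨ξ, hξ, rfl⟩
    have hFξ : 0 < F ξ := hFpos ξ hξ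
    have hnξ : (0 : ℝ) < ‖ξ‖ := norm_pos_iff.2 hξ
    calc (inner ℝ x ξ : ℝ) / F ξ ≤ ‖x‖ * ‖ξ‖ / F ξ := by
          exact div_le_div_of_nonneg_right (real_inner_le_norm x ξ) hFξ.le
      _ ≤ ‖x‖ * ‖ξ‖ / (c * ‖ξ‖) := by
          exact div_le_div_of_nonneg_left (by positivity) (by positivity) (hlow ξ)
      _ = ‖x‖ / c := by field_simp
  have hmem : (inner ℝ x x : ℝ) / F x ∈
      {r : ℝ | ∃ ξ : Euc N, ξ ≠ 0 ∧ r = (inner ℝ x ξ : ℝ) / F ξ} := ⟨x, hx, rfl⟩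
  have hFx : 0 < F x := hFpos x hx
  have hnx : (0 : ℝ) < ‖x‖ := norm_pos_iff.2 hx
  have h1 : ‖x‖ / C ≤ (inner ℝ x x : ℝ) / F x := by
    rw [real_inner_self_eq_norm_mul_norm]
    calc ‖x‖ / C = ‖x‖ * ‖x‖ / (C * ‖x‖) := by field_simp
      _ ≤ ‖x‖ * ‖x‖ / F x :=
        div_le_div_of_nonneg_left (by positivity) hFx (hupp x)
  exact h1.trans (le_csSup hbdd hmem)

lemma lintegral_ball_rpow_neg_lt_top {N : ℕ} (hN : 2 ≤ N) {β : ℝ}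
    (hβ0 : 0 ≤ β) (hβN : β < N) {R : ℝ} (hR : 0 < R) :
    ∫⁻ x in ball (0 : Euc N) R, ENNReal.ofReal (‖x‖ ^ (-β)) < ⊤ := by
  haveI : Nonempty (Fin N) := ⟨⟨0, by omega⟩⟩
  set q : ℝ := (2 : ℝ)⁻¹ with hq
  have hq0 : (0 : ℝ) < q := by norm_num
  have hq1 : q < 1 := by norm_num
  set r : ℕ → ℝ := fun n => R * q ^ n with hr
  have hrpos : ∀ n, 0 < r n := fun n => by positivity
  set A : ℕ → Set (Euc N) := fun n => ball 0 (r n) \ ball 0 (r (n + 1)) with hA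
  set f : Euc N → ℝ≥0∞ := fun x => ENNReal.ofReal (‖x‖ ^ (-β)) with hf
  -- covering
  have hcover : ball (0 : Euc N) R \ {0} ⊆ ⋃ n, A n := by
    rintro x ⟨hxb, hx0⟩
    have hnx : (0 : ℝ) < ‖x‖ := norm_pos_iff.2 hx0
    have hex : ∃ m, r m ≤ ‖x‖ := by
      obtain ⟨m, hm⟩ := exists_pow_lt_of_lt_one (div_pos hnx hR) hq1
      refine ⟨m, ?_⟩
      rw [lt_div_iff₀ hR] at hm
      show R * q ^ m ≤ ‖x‖
      nlinarith
    have hm := Nat.find_spec hex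
    have hm0 : Nat.find hex ≠ 0 := by
      intro h
      rw [h] at hm
      simp only [hr, pow_zero, mul_one] at hm
      have := mem_ball_zero_iff.1 hxb
      linarith
    obtain ⟨n, hn⟩ := Nat.exists_eq_succ_of_ne_zero hm0
    refine Set.mem_iUnion.2 ⟨n, ?_, ?_⟩
    · exact mem_ball_zero_iff.2 (lt_of_not_ge (Nat.find_min hex (by omega)))
    · show x ∉ ball (0 : Euc N) (r (n + 1))
      intro h
      rw [hn] at hm
      exact absurd (mem_ball_zero_iff.1 h) (not_lt.2 hm)
  have hVlt : volume (ball (0 : Euc N) 1) < ⊤ := measure_ball_lt_top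
  set V : ℝ≥0∞ := volume (ball (0 : Euc N) 1) with hV
  -- term bound
  have hterm : ∀ n, (∫⁻ x in A n, f x) ≤
      ENNReal.ofReal ((R * q) ^ (-β) * R ^ N) * ENNReal.ofReal ((q ^ (-β) * q ^ N) ^ n) * V := by
    intro n
    have h1 : ∀ x ∈ A n, f x ≤ ENNReal.ofReal (r (n + 1) ^ (-β)) := by
      rintro x ⟨_, hx2⟩
      have hxn : r (n + 1) ≤ ‖x‖ := not_lt.1 (fun h => hx2 (mem_ball_zero_iff.2 h))
      exact ENNReal.ofReal_le_ofReal
        (Real.rpow_le_rpow_of_nonpos (hrpos (n + 1)) hxn (neg_nonpos.2 hβ0))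
    have h2 : (∫⁻ x in A n, f x) ≤ ENNReal.ofReal (r (n + 1) ^ (-β)) * volume (A n) := by
      calc (∫⁻ x in A n, f x) ≤ ∫⁻ _x in A n, ENNReal.ofReal (r (n + 1) ^ (-β)) :=
            setLIntegral_mono' (measurableSet_ball.diff measurableSet_ball) h1
        _ = ENNReal.ofReal (r (n + 1) ^ (-β)) * volume (A n) := setLIntegral_const _ _
    have h3 : volume (A n) ≤ ENNReal.ofReal (r n ^ N) * V := by
      calc volume (A n) ≤ volume (ball (0 : Euc N) (r n)) := measure_mono Set.diff_subset
        _ = ENNReal.ofReal (r n ^ Module.finrank ℝ (Euc N)) * V :=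
            Measure.addHaar_ball volume 0 (hrpos n).le
        _ = ENNReal.ofReal (r n ^ N) * V := by rw [finrank_euclideanSpace_fin]
    calc (∫⁻ x in A n, f x) ≤ ENNReal.ofReal (r (n + 1) ^ (-β)) * (ENNReal.ofReal (r n ^ N) * V) :=
          h2.trans (mul_le_mul_right h3 _)
      _ = ENNReal.ofReal (r (n + 1) ^ (-β) * r n ^ N) * V := by
          rw [← mul_assoc, ← ENNReal.ofReal_mul (Real.rpow_nonneg (hrpos (n + 1)).le _)]
      _ = ENNReal.ofReal ((R * q) ^ (-β) * R ^ N) * ENNReal.ofReal ((q ^ (-β) * q ^ N) ^ n) * V := by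
          congr 1
          rw [← ENNReal.ofReal_mul (by positivity)]
          congr 1
          have e1 : r (n + 1) ^ (-β) = (R * q) ^ (-β) * (q ^ (-β)) ^ n := by
            have : r (n + 1) = (R * q) * q ^ n := by rw [hr]; ring
            rw [this, Real.mul_rpow (by positivity) (by positivity)]
            congr 1
            rw [← Real.rpow_natCast q n, ← Real.rpow_natCast (q ^ (-β)) n,
              ← Real.rpow_mul hq0.le, ← Real.rpow_mul hq0.le]
            ring_nf
          have e2 : r n ^ N = R ^ N * (q ^ N) ^ n := by
            rw [hr, mul_pow, ← pow_mul, ← pow_mul, Nat.mul_comm]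
          rw [e1, e2, mul_pow]
          ring
    -- sum
  have hq₀ : (0 : ℝ) ≤ q ^ (-β) * q ^ N := by positivity
  have hq₀1 : q ^ (-β) * q ^ N < 1 := by
    have : q ^ (-β) * q ^ N = q ^ ((N : ℝ) - β) := by
      rw [← Real.rpow_natCast q N, ← Real.rpow_add hq0]
      ring_nf
    rw [this]
    exact Real.rpow_lt_one hq0.le hq1 (by linarith)
  set Q : ℝ≥0∞ := ENNReal.ofReal (q ^ (-β) * q ^ N) with hQ
  have hQ1 : Q < 1 := by
    rw [hQ]
    exact ENNReal.ofReal_lt_one.2 hq₀1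
  have hgeom : (∑' n : ℕ, Q ^ n) < ⊤ := by
    rw [ENNReal.tsum_geometric]
    exact ENNReal.inv_lt_top.2 (tsub_pos_of_lt hQ1)
  have hchain : (∫⁻ x in ball (0 : Euc N) R, f x) = ∫⁻ x in ball (0 : Euc N) R \ {0}, f x := by
    refine setLIntegral_congr ?_
    exact (diff_ae_eq_self.2 (measure_mono_null Set.inter_subset_right (measure_singleton 0))).symm
  rw [hchain]
  calc (∫⁻ x in ball (0 : Euc N) R \ {0}, f x)
      ≤ ∫⁻ x in ⋃ n, A n, f x := lintegral_mono_set hcover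
    _ ≤ ∑' n, ∫⁻ x in A n, f x := lintegral_iUnion_le _ _
    _ ≤ ∑' n, ENNReal.ofReal ((R * q) ^ (-β) * R ^ N) * ENNReal.ofReal ((q ^ (-β) * q ^ N) ^ n) * V :=
        ENNReal.tsum_le_tsum hterm
    _ = ENNReal.ofReal ((R * q) ^ (-β) * R ^ N) * V * ∑' n : ℕ, Q ^ n := by
        rw [← ENNReal.tsum_mul_left]
        congr 1
        ext n
        rw [hQ, ENNReal.ofReal_pow hq₀]
        ring
    _ < ⊤ := by
        apply ENNReal.mul_lt_top (ENNReal.mul_lt_top ENNReal.ofReal_lt_top hVlt) hgeom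

end AuxLemmas

set_option maxHeartbeats 2000000 in
/-- The estimate on the region `{|v| ≤ 1}` used in Case 2 of the proof of Theorem 1.3:
`∫_{{|v| ≤ 1}} Φ(λ_N (1-β/N) p |v|^{N/(N-1)}) / F^o(x)^β dx ≤ C (1 + ∫ |v|^N)`. -/
theorem truncExp_small_region_estimate
    (N : ℕ) (hN : 2 ≤ N) (F : Euc N → ℝ)
    (hF0 : ∀ ξ, 0 ≤ F ξ)
    (hFconv : ConvexOn ℝ Set.univ F)
    (hFsmooth : ContDiffOn ℝ 2 F {(0 : Euc N)}ᶜ)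
    (hFhom : ∀ (t : ℝ) (ξ : Euc N), F (t • ξ) = |t| * F ξ)
    (hFpos : ∀ ξ : Euc N, ξ ≠ 0 → 0 < F ξ)
    (β : ℝ) (hβ0 : 0 ≤ β) (hβN : β < N)
    (p : ℝ) (hp : 0 < p) :
    ∃ C : ℝ, 0 < C ∧ ∀ (v : Euc N → ℝ) (g : Euc N → Euc N), MemW1 N v g →
      ∫⁻ x in {x : Euc N | |v x| ≤ 1}, ENNReal.ofReal
          (truncExp N (lambdaN F * (1 - β / N) * p * |v x| ^ ((N : ℝ) / ((N : ℝ) - 1)))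
            / polarF F x ^ β)
        ≤ ENNReal.ofReal (C * (1 + ∫ x, |v x| ^ N)) := by
  haveI : Nonempty (Fin N) := ⟨⟨0, by omega⟩⟩
  obtain ⟨c₀, C₀, hc₀, hC₀, hbounds⟩ := F_bounds hN F hFconv hFhom hFpos
  have hNR : (0 : ℝ) < N := Nat.cast_pos.mpr (by omega)
  have hN1 : (1 : ℝ) ≤ (N : ℝ) - 1 := by
    have : (2 : ℝ) ≤ N := by exact_mod_cast hN
    linarith
  have hβdivN : β / N < 1 := (div_lt_one hNR).2 hβN
  have hlam0 : 0 ≤ lambdaN F := by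
    unfold lambdaN
    exact mul_nonneg (Real.rpow_nonneg (by positivity) _)
      (Real.rpow_nonneg ENNReal.toReal_nonneg _)
  set M : ℝ := lambdaN F * (1 - β / ↑N) * p with hM
  have hM0 : 0 ≤ M := mul_nonneg (mul_nonneg hlam0 (by linarith)) hp.le
  set A : ℝ := M ^ (N - 1) * Real.exp M with hA
  have hA0 : 0 ≤ A := by positivity
  set K : ℝ≥0∞ := ∫⁻ x in Metric.ball (0 : Euc N) C₀,
      ENNReal.ofReal (A * C₀ ^ β * ‖x‖ ^ (-β)) with hK
  have hmeas_rpow : Measurable fun x : Euc N => ENNReal.ofReal (‖x‖ ^ (-β)) :=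
    ENNReal.measurable_ofReal.comp (measurable_norm.pow_const _)
  have hKlt : K < ⊤ := by
    have h := lintegral_ball_rpow_neg_lt_top (N := N) hN hβ0 hβN hC₀
    have heq : K = ENNReal.ofReal (A * C₀ ^ β) *
        ∫⁻ x in Metric.ball (0 : Euc N) C₀, ENNReal.ofReal (‖x‖ ^ (-β)) := by
      rw [hK, ← lintegral_const_mul _ hmeas_rpow]
      refine lintegral_congr fun x => ?_
      rw [← ENNReal.ofReal_mul (by positivity)]
    rw [heq]
    exact ENNReal.mul_lt_top ENNReal.ofReal_lt_top h
  refine ⟨A + K.toReal + 1, by positivity, ?_⟩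
  intro v g hv
  obtain ⟨hvN, -, -⟩ := hv
  have hsm := hvN.aestronglyMeasurable
  set w : Euc N → ℝ := hsm.mk v with hw
  have hwm : Measurable w := hsm.stronglyMeasurable_mk.measurable
  have hvw : v =ᵐ[volume] w := hsm.ae_eq_mk
  -- integrability of |v|^N
  have hIntv : Integrable (fun x => |v x| ^ N) volume := by
    have h := hvN.integrable_norm_rpow (by simp; omega) (by simp)
    refine h.congr (Filter.Eventually.of_forall fun x => ?_)
    show ‖v x‖ ^ ((N : ℝ≥0∞)).toReal = |v x| ^ N
    rw [ENNReal.toReal_natCast, Real.rpow_natCast, Real.norm_eq_abs]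
  have hIntw : Integrable (fun x => |w x| ^ N) volume :=
    hIntv.congr (hvw.mono fun x hx => by simp only [hx])
  set I : ℝ := ∫ x, |v x| ^ N with hI
  have hI0 : 0 ≤ I := integral_nonneg fun x => by positivity
  have hIw : (∫ x, |w x| ^ N) = I :=
    integral_congr_ae (hvw.symm.mono fun x hx => by simp only [hx])
  set f₁ : Euc N → ℝ≥0∞ := fun x => ENNReal.ofReal (A * |w x| ^ N) with hf₁
  set f₂ : Euc N → ℝ≥0∞ := (Metric.ball (0 : Euc N) C₀).indicator
      (fun x => ENNReal.ofReal (A * C₀ ^ β * ‖x‖ ^ (-β))) with hf₂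
  have hf₁meas : Measurable f₁ :=
    ENNReal.measurable_ofReal.comp ((hwm.abs.pow_const N).const_mul A)
  set S' : Set (Euc N) := {x | |w x| ≤ 1} with hS'
  have hS'meas : MeasurableSet S' := measurableSet_le hwm.abs measurable_const
  have hSS' : {x : Euc N | |v x| ≤ 1} =ᵐ[volume] S' := by
    rw [Filter.eventuallyEq_set]
    filter_upwards [hvw] with x hx
    simp [Set.mem_setOf_eq, hx, hS']
  -- pointwise bound
  have hpt : ∀ x, |w x| ≤ 1 → x ≠ 0 →
      ENNReal.ofReal (truncExp N (M * |w x| ^ ((N : ℝ) / ((N : ℝ) - 1)))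
        / polarF F x ^ β) ≤ f₁ x + f₂ x := by
    intro x hwx hx0
    have habs : (0 : ℝ) ≤ |w x| := abs_nonneg _
    set t : ℝ := |w x| ^ ((N : ℝ) / ((N : ℝ) - 1)) with ht
    have ht0 : 0 ≤ t := Real.rpow_nonneg habs _
    have ht1 : t ≤ 1 := Real.rpow_le_one habs hwx (by positivity)
    have hs0 : 0 ≤ M * t := mul_nonneg hM0 ht0
    have hsM : M * t ≤ M := mul_le_of_le_one_right hM0 ht1
    have htpow : t ^ (N - 1) = |w x| ^ N := by
      rw [ht, ← Real.rpow_natCast (|w x| ^ ((N : ℝ) / ((N : ℝ) - 1))) (N - 1),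
        ← Real.rpow_mul habs]
      have hcast : ((N - 1 : ℕ) : ℝ) = (N : ℝ) - 1 := by
        have : 1 ≤ N := by omega
        push_cast [this]
        ring
      rw [hcast, div_mul_cancel₀ _ (by linarith : (N : ℝ) - 1 ≠ 0), Real.rpow_natCast]
    have hΦ : truncExp N (M * t) ≤ A * |w x| ^ N := by
      calc truncExp N (M * t) ≤ (M * t) ^ (N - 1) * Real.exp (M * t) := truncExp_le N hs0
        _ ≤ (M * t) ^ (N - 1) * Real.exp M := by
            have := Real.exp_le_exp.2 hsM
            have h0 : (0 : ℝ) ≤ (M * t) ^ (N - 1) := by positivity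
            nlinarith
        _ = M ^ (N - 1) * t ^ (N - 1) * Real.exp M := by rw [mul_pow]
        _ = A * |w x| ^ N := by rw [htpow, hA]; ring
    have hΦ0 : 0 ≤ truncExp N (M * t) := truncExp_nonneg N hs0
    have hpolar : ‖x‖ / C₀ ≤ polarF F x :=
      polar_lower F hc₀ hC₀ (fun ξ => (hbounds ξ).1) (fun ξ => (hbounds ξ).2) hFpos x hx0
    by_cases hball : x ∈ Metric.ball (0 : Euc N) C₀
    · have hnx : (0 : ℝ) < ‖x‖ := norm_pos_iff.2 hx0
      have hdpos : 0 < (‖x‖ / C₀) ^ β := Real.rpow_pos_of_pos (by positivity) β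
      have hden : (‖x‖ / C₀) ^ β ≤ polarF F x ^ β :=
        Real.rpow_le_rpow (by positivity) hpolar hβ0
      have hdiv : truncExp N (M * t) / polarF F x ^ β ≤ (A * |w x| ^ N) / (‖x‖ / C₀) ^ β :=
        div_le_div₀ (by positivity) hΦ hdpos hden
      have hpowle : |w x| ^ N ≤ 1 := pow_le_one₀ habs hwx
      have h2 : (A * |w x| ^ N) / (‖x‖ / C₀) ^ β ≤ A * C₀ ^ β * ‖x‖ ^ (-β) := by
        have hle : (A * |w x| ^ N) / (‖x‖ / C₀) ^ β ≤ A / (‖x‖ / C₀) ^ β := by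
          apply div_le_div_of_nonneg_right _ hdpos.le
          nlinarith
        refine hle.trans (le_of_eq ?_)
        rw [Real.div_rpow hnx.le hC₀.le, Real.rpow_neg hnx.le]
        field_simp
      calc ENNReal.ofReal (truncExp N (M * t) / polarF F x ^ β)
          ≤ ENNReal.ofReal (A * C₀ ^ β * ‖x‖ ^ (-β)) :=
            ENNReal.ofReal_le_ofReal (hdiv.trans h2)
        _ = f₂ x := by rw [hf₂, Set.indicator_of_mem hball]
        _ ≤ f₁ x + f₂ x := le_add_self
    · have hnx : C₀ ≤ ‖x‖ := by
        have := Metric.mem_ball.not.1 hball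
        rw [dist_zero_right] at this
        linarith [not_lt.1 this]
      have h1le : (1 : ℝ) ≤ polarF F x := by
        have h1 : (1 : ℝ) ≤ ‖x‖ / C₀ := (one_le_div hC₀).2 hnx
        linarith
      have hD1 : (1 : ℝ) ≤ polarF F x ^ β := by
        have := Real.rpow_le_rpow zero_le_one h1le hβ0
        rwa [Real.one_rpow] at this
      have hfin : truncExp N (M * t) / polarF F x ^ β ≤ A * |w x| ^ N :=
        (div_le_self hΦ0 hD1).trans hΦ
      calc ENNReal.ofReal (truncExp N (M * t) / polarF F x ^ β)
          ≤ ENNReal.ofReal (A * |w x| ^ N) := ENNReal.ofReal_le_ofReal hfin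
        _ = f₁ x := rfl
        _ ≤ f₁ x + f₂ x := le_self_add
  -- a.e. versions
  have hzero : ∀ᵐ x ∂volume.restrict S', x ≠ 0 := by
    have h0 : volume.restrict S' {(0 : Euc N)} = 0 := by
      rw [Measure.restrict_apply (measurableSet_singleton 0)]
      exact measure_mono_null Set.inter_subset_left (measure_singleton 0)
    rw [ae_iff]
    convert h0 using 2
    ext y; simp
  have hae : ∀ᵐ x ∂volume.restrict S',
      ENNReal.ofReal (truncExp N (M * |w x| ^ ((N : ℝ) / ((N : ℝ) - 1)))
        / polarF F x ^ β) ≤ f₁ x + f₂ x := by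
    filter_upwards [ae_restrict_mem hS'meas, hzero] with x hxS hx0
    exact hpt x hxS hx0
  -- assemble
  have hintf₁ : (∫⁻ x, f₁ x) = ENNReal.ofReal (A * I) := by
    have h1 : (∫⁻ x, f₁ x) = ENNReal.ofReal A * ∫⁻ x, ENNReal.ofReal (|w x| ^ N) := by
      have hm2 : Measurable fun x : Euc N => ENNReal.ofReal (|w x| ^ N) :=
        ENNReal.measurable_ofReal.comp (hwm.abs.pow_const N)
      rw [← lintegral_const_mul _ hm2]
      refine lintegral_congr fun x => ?_
      simp only [hf₁]
      rw [← ENNReal.ofReal_mul hA0]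
    have h2 : (∫⁻ x, ENNReal.ofReal (|w x| ^ N)) = ENNReal.ofReal (∫ x, |w x| ^ N) :=
      (ofReal_integral_eq_lintegral_ofReal hIntw
        (Filter.Eventually.of_forall fun x => by positivity)).symm
    rw [h1, h2, hIw, ← ENNReal.ofReal_mul hA0]
  have hintf₂ : (∫⁻ x, f₂ x) = K := by
    rw [hf₂, lintegral_indicator measurableSet_ball, hK]
  calc ∫⁻ x in {x : Euc N | |v x| ≤ 1}, ENNReal.ofReal
        (truncExp N (M * |v x| ^ ((N : ℝ) / ((N : ℝ) - 1))) / polarF F x ^ β)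
      = ∫⁻ x in S', ENNReal.ofReal
        (truncExp N (M * |v x| ^ ((N : ℝ) / ((N : ℝ) - 1))) / polarF F x ^ β) := by
        rw [Measure.restrict_congr_set hSS']
    _ = ∫⁻ x in S', ENNReal.ofReal
        (truncExp N (M * |w x| ^ ((N : ℝ) / ((N : ℝ) - 1))) / polarF F x ^ β) := by
        refine lintegral_congr_ae ?_
        filter_upwards [ae_restrict_of_ae hvw] with x hx
        rw [hx]
    _ ≤ ∫⁻ x in S', (f₁ x + f₂ x) := lintegral_mono_ae hae
    _ ≤ ∫⁻ x, (f₁ x + f₂ x) := setLIntegral_le_lintegral _ _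
    _ = (∫⁻ x, f₁ x) + ∫⁻ x, f₂ x := lintegral_add_left hf₁meas _
    _ = ENNReal.ofReal (A * I) + K := by rw [hintf₁, hintf₂]
    _ ≤ ENNReal.ofReal ((A + K.toReal + 1) * (1 + I)) := by
        have hKr : K = ENNReal.ofReal K.toReal := (ENNReal.ofReal_toReal hKlt.ne).symm
        rw [hKr, ← ENNReal.ofReal_add (by positivity) ENNReal.toReal_nonneg]
        apply ENNReal.ofReal_le_ofReal
        have hKt : 0 ≤ K.toReal := ENNReal.toReal_nonneg
        rw [ENNReal.toReal_ofReal hKt]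
        nlinarith [mul_nonneg hKt hI0, mul_nonneg hA0 hI0]
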